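/- For the Laplacian L of a finite simple graph with incidence matrix C (so L = C^T C), det(I + L) = Σ_P det(C_P)^2, where the sum is over all square patterns P of C including the empty pattern contributing 1. -/

import Mathlib

open Matrix SimpleGraph

/-- `C` is a signed vertex-edge incidence matrix: each row (edge) has exactly
one `+1` entry and one `-1` entry (at the two endpoints) and zeros elsewhere. -/
def IsSignedIncidence {m n : ℕ} (C : Matrix (Fin m) (Fin n) ℤ) : Prop :=
  ∀ e : Fin m, ∃ i j : Fin n, i ≠ j ∧ C e i = 1 ∧ C e j = -1 ∧
    ∀ v : Fin n, v ≠ i → v ≠ j → C e v = 0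

/-!
Expanding `det (1 + L)` multilinearly in the rows gives the sum of all principal minors of
`L = Cᵀ * C`, the empty one contributing `1`. By Cauchy–Binet, the principal minor on the vertex
set `J` is `∑ det (C_{I,J})²` over the edge sets `I` with `|I| = |J|`.

Cauchy–Binet itself comes from the same multilinear expansion: the rows of `A * B` are
`∑ⱼ A i j • B j`, so `det (A * B)` is a sum over row selections `r` of `∏ A i (r i) * det B_r`.
Only injective `r` survive; writing such an `r` as the increasing enumeration of its image `I`
composed with a permutation `τ` turns the sum over `τ` into `det A_I * det B_I`.
-/

namespace Finset

open Equiv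

variable {ι M : Type*} [Fintype ι] [LinearOrder ι] [AddCommMonoid M] {k : ℕ}

theorem sum_image_eq_sum_perm_orderEmbOfFin (I : Finset ι) (h : I.card = k)
    (g : (Fin k → ι) → M) :
    ∑ r with univ.image r = I, g r = ∑ τ : Perm (Fin k), g (I.orderEmbOfFin h ∘ τ) := by
  set e := I.orderEmbOfFin h
  symm
  refine sum_nbij (fun τ => e ∘ τ) (fun τ _ => ?_) (fun τ _ τ' _ hττ' => ?_) (fun r hr => ?_)
    fun _ _ => rfl
  · simp [Set.range_comp, e, ← coe_inj]
  · exact Equiv.ext fun x => e.injective (congrFun hττ' x)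
  · have hr : univ.image r = I := (mem_filter.mp hr).2
    have r_inj : Function.Injective r := by
      rw [← Set.injOn_univ, ← coe_univ, ← card_image_iff, hr, h, card_univ, Fintype.card_fin]
    have hrange : Set.range r = Set.range e := by
      rw [range_orderEmbOfFin, ← hr, coe_image, coe_univ, Set.image_univ]
    refine ⟨(ofInjective r r_inj).trans ((setCongr hrange).trans (ofInjective e e.injective).symm),
      mem_coe.mpr (mem_univ _), funext fun x => ?_⟩
    simp [apply_ofInjective_symm]

theorem sum_eq_sum_card_eq_sum_perm_orderEmbOfFin (g : (Fin k → ι) → M)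
    (hg : ∀ r, ¬ Function.Injective r → g r = 0) :
    ∑ r, g r = ∑ I : Finset ι,
      if h : I.card = k then ∑ τ : Perm (Fin k), g (I.orderEmbOfFin h ∘ τ) else 0 := by
  rw [← sum_fiberwise univ (fun r => univ.image r) g]
  refine sum_congr rfl fun I _ => ?_
  split_ifs with h
  · exact sum_image_eq_sum_perm_orderEmbOfFin I h g
  · refine sum_eq_zero fun r hr => hg r fun r_inj => h ?_
    rw [← (mem_filter.mp hr).2, card_image_of_injective _ r_inj, card_univ, Fintype.card_fin]

end Finset

namespace Matrix

open Finset Equiv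

variable {R : Type*} [CommRing R]

theorem det_one_add_eq_sum_det_submatrix {n : Type*} [Fintype n] [DecidableEq n]
    (M : Matrix n n R) :
    det (1 + M) = ∑ s : Finset n, det (M.submatrix ((↑) : s → n) (↑)) := by
  rw [add_comm]
  exact (detRowAlternating.map_add_univ M.row (1 : Matrix n n R).row).trans
    (sum_congr rfl fun s _ => det_piecewise_one_eq_submatrix_det M s)

variable {ι : Type*} {k : ℕ}

theorem det_submatrix_eq_zero_of_not_injective (B : Matrix ι (Fin k) R) {r : Fin k → ι}
    (hr : ¬ Function.Injective r) : det (B.submatrix r id) = 0 := by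
  obtain ⟨i, j, hrij, hij⟩ := Function.not_injective_iff.mp hr
  exact det_zero_of_row_eq hij (funext fun l => by simp [hrij])

theorem det_mul_eq_sum_prod_mul_det_submatrix [Fintype ι] (A : Matrix (Fin k) ι R)
    (B : Matrix ι (Fin k) R) :
    det (A * B) = ∑ r : Fin k → ι, (∏ i, A i (r i)) * det (B.submatrix r id) := by
  have hrows : (A * B).row = fun i => ∑ j, A i j • B.row j := by
    ext i l
    simp [mul_apply]
  calc det (A * B) = detRowAlternating fun i => ∑ j, A i j • B.row j := congrArg _ hrows
    _ = ∑ r : Fin k → ι, detRowAlternating fun i => A i (r i) • B.row (r i) :=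
        detRowAlternating.map_sum fun i j => A i j • B.row j
    _ = _ := sum_congr rfl fun r _ => detRowAlternating.map_smul_univ _ _

variable [LinearOrder ι]

theorem det_submatrix_orderEmbOfFin (M : Matrix ι ι R) (s : Finset ι) :
    det (M.submatrix (s.orderEmbOfFin rfl) (s.orderEmbOfFin rfl)) =
      det (M.submatrix ((↑) : s → ι) (↑)) := by
  rw [← det_submatrix_equiv_self (s.orderIsoOfFin rfl).toEquiv]
  rfl

variable [Fintype ι]

theorem det_mul_eq_sum_det_submatrix_mul_det_submatrix
    (A : Matrix (Fin k) ι R) (B : Matrix ι (Fin k) R) :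
    det (A * B) = ∑ I : Finset ι, if h : I.card = k then
      det (A.submatrix id (I.orderEmbOfFin h)) * det (B.submatrix (I.orderEmbOfFin h) id)
    else 0 := by
  rw [det_mul_eq_sum_prod_mul_det_submatrix, sum_eq_sum_card_eq_sum_perm_orderEmbOfFin _
    fun r hr => by rw [det_submatrix_eq_zero_of_not_injective B hr, mul_zero]]
  refine sum_congr rfl fun I _ => dite_congr rfl (fun h => ?_) fun _ => rfl
  set e := I.orderEmbOfFin h
  calc ∑ τ : Perm (Fin k), (∏ i, A i (e (τ i))) * det (B.submatrix (e ∘ τ) id)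
      = ∑ τ : Perm (Fin k), (Perm.sign τ * ∏ i, (A.submatrix id e)ᵀ (τ i) i) *
          det (B.submatrix e id) := by
        refine sum_congr rfl fun τ _ => ?_
        rw [show B.submatrix (e ∘ τ) id = (B.submatrix e id).submatrix τ id from rfl, det_permute]
        simp only [transpose_apply, submatrix_apply, id]
        ring
    _ = det (A.submatrix id e) * det (B.submatrix e id) := by
        rw [← sum_mul, ← det_transpose (A.submatrix id e), det_apply' (A.submatrix id e)ᵀ]

theorem det_transpose_mul_self_eq_sum_sq (B : Matrix ι (Fin k) R) :
    det (Bᵀ * B) = ∑ I : Finset ι,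
      if h : I.card = k then det (B.submatrix (I.orderEmbOfFin h) id) ^ 2 else 0 := by
  rw [det_mul_eq_sum_det_submatrix_mul_det_submatrix]
  refine sum_congr rfl fun I _ => dite_congr rfl (fun h => ?_) fun _ => rfl
  rw [← transpose_submatrix, det_transpose, sq]

end Matrix

open Finset in
theorem det_one_add_lapMatrix_eq_sum_sq_incidence_minors_general
    {m n : ℕ} (G : SimpleGraph (Fin n)) [DecidableRel G.Adj]
    (C : Matrix (Fin m) (Fin n) ℤ)
    (hL : Cᵀ * C = G.lapMatrix ℤ) :
    (1 + G.lapMatrix ℤ).det =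
      ∑ I : Finset (Fin m), ∑ J : Finset (Fin n),
        (if h : I.card = J.card then
          ((C.submatrix (I.orderEmbOfFin h) (J.orderEmbOfFin rfl)).det) ^ 2
        else 0) := by
  rw [← hL, det_one_add_eq_sum_det_submatrix, sum_comm]
  refine sum_congr rfl fun J _ => ?_
  let e := J.orderEmbOfFin rfl
  have hminor : (Cᵀ * C).submatrix e e = (C.submatrix id e)ᵀ * C.submatrix id e := by
    rw [submatrix_mul _ _ _ id _ Function.bijective_id, transpose_submatrix]
  rw [← det_submatrix_orderEmbOfFin, hminor, det_transpose_mul_self_eq_sum_sq]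
  rfl

theorem det_one_add_lapMatrix_eq_sum_sq_incidence_minors
    {m n : ℕ} (G : SimpleGraph (Fin n)) [DecidableRel G.Adj]
    (C : Matrix (Fin m) (Fin n) ℤ) (hC : IsSignedIncidence C)
    (hL : Cᵀ * C = G.lapMatrix ℤ) :
    (1 + G.lapMatrix ℤ).det =
      ∑ I : Finset (Fin m), ∑ J : Finset (Fin n),
        (if h : I.card = J.card then
          ((C.submatrix (I.orderEmbOfFin h) (J.orderEmbOfFin rfl)).det) ^ 2
        else 0) :=
  det_one_add_lapMatrix_eq_sum_sq_incidence_minors_general G C hL
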